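/- Let Φ ⊆ Σ^{□k} be a non-conflictual set of tagged k-words, let h = ⌈k/2⌉, and let F_h = σ(Φ) be the set of tag-erasures of words of Φ. Then the h-strictly-locally-testable language Loc(F_h) over Σ contains the maximal language Red(Φ). -/

import Mathlib

/-!
Common framework from the paper "Higher-order Operator Precedence Languages":
tagged words over an alphabet `α` (with a distinguished end-mark letter
`hash`), the tag set Δ = {[, ], ⊙}, tagged `k`-word factors, conflictual sets,
the strictly-locally-testable tagged language `Loc(Φ)`, handles, reductions
`⇝_Φ`, and the (tagged) maximal languages `RedBar Φ` / `Red Φ`.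

Conventions: an end-word `⍟` is the alternating word `(#⊙)^m #` of (tagged)
length `k-2`, so that it contributes `(k-1)/2` end-marks on each side,
matching all the examples of the paper.
-/

namespace HOP

/-- The three tags `[`, `]`, `⊙`. -/
inductive Tagg : Type where
  | lb : Tagg
  | rb : Tagg
  | dot : Tagg
deriving DecidableEq

/-- Symbols: either a terminal letter of `α` or a tag. -/
abbrev Sym (α : Type) := α ⊕ Tagg

/-- The projection `σ` erasing all tags. -/
def erase {α : Type} (w : List (Sym α)) : List α := w.filterMap Sum.getLeft?

/-- Tagged words: words in `Σ(ΔΣ)*`, i.e. alternating terminals and tags,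
beginning and ending with a terminal. -/
inductive IsTagged {α : Type} : List (Sym α) → Prop where
  | single (a : α) : IsTagged [Sum.inl a]
  | cons (a : α) (t : Tagg) {w : List (Sym α)} :
      IsTagged w → IsTagged (Sum.inl a :: Sum.inr t :: w)

/-- `φ_k(w)`: the set of tagged `k`-words occurring as factors of `w`. -/
def taggedFactors {α : Type} (k : ℕ) (w : List (Sym α)) : Set (List (Sym α)) :=
  {u | u.length = k ∧ IsTagged u ∧ u <:+: w}

/-- A set of tagged words is conflictual iff it contains two distinct words
with the same tag-erasure. -/
def Conflictual {α : Type} (S : Set (List (Sym α))) : Prop :=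
  ∃ x ∈ S, ∃ y ∈ S, x ≠ y ∧ erase x = erase y

def NonConflictual {α : Type} (S : Set (List (Sym α))) : Prop := ¬ Conflictual S

/-- `S` is a set of tagged `k`-words. -/
def TaggedKWords {α : Type} (k : ℕ) (S : Set (List (Sym α))) : Prop :=
  ∀ u ∈ S, IsTagged u ∧ u.length = k

/-- `hashWord hash n = # ⊙ # ⊙ … #` with `n+1` end-marks (tagged length `2n+1`). -/
def hashWord {α : Type} (hash : α) : ℕ → List (Sym α)
  | 0 => [Sum.inl hash]
  | n + 1 => Sum.inl hash :: Sum.inr Tagg.dot :: hashWord hash n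

/-- The end-word `⍟ ∈ (#⊙)*#` used with width `k`: it has tagged length `k-2`
(for odd `k ≥ 3`), i.e. `(k-1)/2` end-marks. -/
def endwFor {α : Type} (hash : α) (k : ℕ) : List (Sym α) := hashWord hash ((k - 3) / 2)

/-- `wrap hash k w = ⍟ [ w ] ⍟`. -/
def wrap {α : Type} (hash : α) (k : ℕ) (w : List (Sym α)) : List (Sym α) :=
  endwFor hash k ++ Sum.inr Tagg.lb :: (w ++ Sum.inr Tagg.rb :: endwFor hash k)

/-- `finalWord hash k = ⍟ ⊙ ⍟`, the target of a complete reduction. -/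
def finalWord {α : Type} (hash : α) (k : ℕ) : List (Sym α) :=
  endwFor hash k ++ Sum.inr Tagg.dot :: endwFor hash k

/-- The (full-word form of the) `k`-strictly-locally-testable tagged language:
all tagged `k`-word factors belong to `Φ`.  A tagged word `w` is in `Loc(Φ)`
in the sense of the paper iff `wrap hash k w ∈ LocFull k Φ`. -/
def LocFull {α : Type} (k : ℕ) (Φ : Set (List (Sym α))) : Set (List (Sym α)) :=
  {w | IsTagged w ∧ taggedFactors k w ⊆ Φ}

/-- `Loc(Φ)` as a set of tagged words `w` (tested on `⍟[w]⍟`). -/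
def LocTagged {α : Type} (hash : α) (k : ℕ) (Φ : Set (List (Sym α))) :
    Set (List (Sym α)) :=
  {w | IsTagged w ∧ wrap hash k w ∈ LocFull k Φ}

/-- The body `x` of a handle `[x]`: a tagged word over `Σ - {#}` whose tags are
all `⊙`. -/
def IsHandleBody {α : Type} (hash : α) (x : List (Sym α)) : Prop :=
  IsTagged x ∧ (∀ t : Tagg, Sum.inr t ∈ x → t = Tagg.dot) ∧ Sum.inl hash ∉ x

/-- One reduction step `w[x]z ⇝_Φ w s z`, allowed when `[x]` is a handle and
both source and target have all their tagged `k`-factors in `Φ`. -/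
def RStep {α : Type} (hash : α) (k : ℕ) (Φ : Set (List (Sym α)))
    (u v : List (Sym α)) : Prop :=
  ∃ w x z, ∃ s : Tagg, IsHandleBody hash x ∧
    u = w ++ Sum.inr Tagg.lb :: (x ++ Sum.inr Tagg.rb :: z) ∧
    v = w ++ Sum.inr s :: z ∧
    u ∈ LocFull k Φ ∧ v ∈ LocFull k Φ

/-- `⇝*_Φ`. -/
def Reduces {α : Type} (hash : α) (k : ℕ) (Φ : Set (List (Sym α))) :
    List (Sym α) → List (Sym α) → Prop :=
  Relation.ReflTransGen (RStep hash k Φ)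

/-- The tagged maximal language `Red̄(Φ)`. -/
def RedBar {α : Type} (hash : α) (k : ℕ) (Φ : Set (List (Sym α))) :
    Set (List (Sym α)) :=
  {w | IsTagged w ∧ Reduces hash k Φ (wrap hash k w) (finalWord hash k)}

/-- The maximal language `Red(Φ) = σ(Red̄(Φ))`. -/
def Red {α : Type} (hash : α) (k : ℕ) (Φ : Set (List (Sym α))) : Set (List α) :=
  erase '' RedBar hash k Φ

/-- Length-`j` factors of a plain word. -/
def plainFactors {α : Type} (j : ℕ) (w : List α) : Set (List α) :=
  {u | u.length = j ∧ u <:+: w}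

/-- The `j`-strictly-locally-testable (plain) language `Loc(F)`, with
end-words `#^(j-1)`; as usual the language is `ε`-free and over `Σ - {#}`. -/
def LocPlain {α : Type} (hash : α) (j : ℕ) (F : Set (List α)) : Set (List α) :=
  {x | x ≠ [] ∧ hash ∉ x ∧
    plainFactors j
      (List.replicate (j - 1) hash ++ x ++ List.replicate (j - 1) hash) ⊆ F}

end HOP

/-!
For `w ∈ Red̄(Φ)` the word `⍟[w]⍟` still carries the bracket `[`, so it is not `⍟⊙⍟`
and some reduction step starts at it; every step requires its source to lie in `Loc(Φ)`.
A factor of length `h = (k+1)/2` of `σ(⍟[w]⍟) = #^(h-1) σ(w) #^(h-1)` lifts to a tagged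
factor of `⍟[w]⍟` of length `2h - 1 = k`, which therefore lies in `Φ`. Finally `σ(w)`
contains no `#`: handles contain no `#`, so reductions preserve the number of `#`, and
`⍟⊙⍟` has no `#` besides those of the two end-words.
-/

namespace HOP

variable {α : Type}

section Erase

@[simp] theorem erase_nil : erase ([] : List (Sym α)) = [] := rfl

@[simp] theorem erase_cons_inl (a : α) (l : List (Sym α)) :
    erase (Sum.inl a :: l) = a :: erase l := rfl

@[simp] theorem erase_cons_inr (t : Tagg) (l : List (Sym α)) :
    erase (Sum.inr t :: l) = erase l := rfl

@[simp] theorem erase_append (u v : List (Sym α)) :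
    erase (u ++ v) = erase u ++ erase v := List.filterMap_append

theorem mem_erase {a : α} {w : List (Sym α)} : a ∈ erase w ↔ Sum.inl a ∈ w := by
  simp [erase, Sum.getLeft?_eq_some_iff]

theorem erase_hashWord (hash : α) (n : ℕ) :
    erase (hashWord hash n) = List.replicate (n + 1) hash := by
  induction n with
  | zero => rfl
  | succ n ih => simp [hashWord, ih, List.replicate_succ]

theorem erase_wrap (hash : α) {k : ℕ} (hk : 3 ≤ k) (w : List (Sym α)) :
    erase (wrap hash k w) =
      List.replicate ((k + 1) / 2 - 1) hash ++ erase w ++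
        List.replicate ((k + 1) / 2 - 1) hash := by
  have hlen : (k - 3) / 2 + 1 = (k + 1) / 2 - 1 := by omega
  simp [wrap, endwFor, erase_hashWord, hlen]

end Erase

section Tagged

theorem IsTagged.erase_ne_nil {w : List (Sym α)} (hw : IsTagged w) : erase w ≠ [] := by
  cases hw <;> simp

theorem IsTagged.length_add_one {w : List (Sym α)} (hw : IsTagged w) :
    w.length + 1 = 2 * (erase w).length := by
  induction hw with
  | single a => rfl
  | cons a t hw ih =>
    simp only [List.length_cons, erase_cons_inl, erase_cons_inr]
    omega

theorem IsTagged.exists_prefix_erase_eq {W : List (Sym α)} (hW : IsTagged W)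
    {u : List α} (hu : u <+: erase W) (hne : u ≠ []) :
    ∃ v, v <+: W ∧ IsTagged v ∧ erase v = u := by
  induction hW generalizing u with
  | single a =>
    obtain rfl : u = [a] :=
      (List.sublist_singleton.mp (by simpa using hu.sublist)).resolve_left hne
    exact ⟨_, List.prefix_refl _, .single a, rfl⟩
  | @cons a t w hw ih =>
    obtain ⟨b, u, rfl⟩ := List.exists_cons_of_ne_nil hne
    obtain ⟨rfl, hu'⟩ : b = a ∧ u <+: erase w := by simpa using hu
    rcases eq_or_ne u [] with rfl | hu0
    · exact ⟨[Sum.inl b], by simp, .single b, rfl⟩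
    · obtain ⟨v, hvW, hv, rfl⟩ := ih hu' hu0
      exact ⟨Sum.inl b :: Sum.inr t :: v, by simpa using hvW, hv.cons b t, rfl⟩

theorem IsTagged.exists_infix_erase_eq {W : List (Sym α)} (hW : IsTagged W)
    {u : List α} (hu : u <:+: erase W) (hne : u ≠ []) :
    ∃ v, v <:+: W ∧ IsTagged v ∧ erase v = u := by
  induction hW generalizing u with
  | single a =>
    obtain rfl : u = [a] :=
      (List.sublist_singleton.mp (by simpa using hu.sublist)).resolve_left hne
    exact ⟨_, List.infix_refl _, .single a, rfl⟩
  | cons a t hw ih =>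
    rcases List.infix_cons_iff.mp (by simpa using hu) with hpre | hinf
    · obtain ⟨v, hvW, hv, hvu⟩ :=
        (hw.cons a t).exists_prefix_erase_eq (by simpa using hpre) hne
      exact ⟨v, hvW.isInfix, hv, hvu⟩
    · obtain ⟨v, hvW, hv, hvu⟩ := ih hinf hne
      exact ⟨v, List.infix_cons (List.infix_cons hvW), hv, hvu⟩

theorem IsTagged.plainFactors_erase_subset {W : List (Sym α)} (hW : IsTagged W) {k : ℕ}
    (hk : Odd k) : plainFactors ((k + 1) / 2) (erase W) ⊆ erase '' taggedFactors k W := by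
  rintro u ⟨hul, huW⟩
  obtain ⟨j, rfl⟩ := hk
  have hne : u ≠ [] := by rintro rfl; simp at hul; omega
  obtain ⟨v, hvW, hv, rfl⟩ := hW.exists_infix_erase_eq huW hne
  have hvl := hv.length_add_one
  exact ⟨v, ⟨by omega, hv, hvW⟩, rfl⟩

end Tagged

section Reduction

variable {hash : α} {k : ℕ} {Φ : Set (List (Sym α))} {u v : List (Sym α)}

theorem Reduces.mem_locFull_of_ne (h : Reduces hash k Φ u v) (hne : u ≠ v) :
    u ∈ LocFull k Φ := by
  obtain heq | ⟨_, ⟨_, _, _, _, _, _, _, hu, -⟩, -⟩ := h.cases_head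
  exacts [absurd heq hne, hu]

theorem RStep.count_erase_eq [DecidableEq α] (h : RStep hash k Φ u v) :
    (erase u).count hash = (erase v).count hash := by
  obtain ⟨w, x, z, s, ⟨-, -, hx⟩, rfl, rfl, -, -⟩ := h
  simp [List.count_eq_zero.mpr (mt mem_erase.mp hx)]

theorem Reduces.count_erase_eq [DecidableEq α] (h : Reduces hash k Φ u v) :
    (erase u).count hash = (erase v).count hash := by
  induction h with
  | refl => rfl
  | tail _ hstep ih => exact ih.trans hstep.count_erase_eq

theorem lb_not_mem_hashWord (n : ℕ) : Sum.inr Tagg.lb ∉ hashWord hash n := by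
  induction n with
  | zero => simp [hashWord]
  | succ n ih => simpa [hashWord] using ih

theorem wrap_ne_finalWord (w : List (Sym α)) : wrap hash k w ≠ finalWord hash k := by
  intro h
  have hlb : Sum.inr Tagg.lb ∈ wrap hash k w := by simp [wrap]
  simp [h, finalWord, endwFor, lb_not_mem_hashWord] at hlb

theorem hash_not_mem_of_mem_redBar {w : List (Sym α)} (hw : w ∈ RedBar hash k Φ) :
    hash ∉ erase w := by
  classical
  have hcount := hw.2.count_erase_eq
  simp [wrap, finalWord] at hcount
  exact List.count_eq_zero.mp hcount

end Reduction

theorem red_subset_locPlain_general {α : Type} (hash : α) {k : ℕ} (hk : Odd k)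
    (hk3 : 3 ≤ k) {Φ : Set (List (Sym α))} :
    Red hash k Φ ⊆ LocPlain hash ((k + 1) / 2) (erase '' Φ) := by
  rintro _ ⟨w, hw, rfl⟩
  have hloc : wrap hash k w ∈ LocFull k Φ :=
    hw.2.mem_locFull_of_ne (wrap_ne_finalWord w)
  refine ⟨hw.1.erase_ne_nil, hash_not_mem_of_mem_redBar hw, ?_⟩
  rw [← erase_wrap hash hk3]
  exact (hloc.1.plainFactors_erase_subset hk).trans (Set.image_mono hloc.2)

/-- **Lemma 3.3 (Refinement over SLT)**: with `h = ⌈k/2⌉ = (k+1)/2` and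
`F_h = σ(Φ)`, the `h`-strictly-locally-testable language `Loc(F_h)` contains
the maximal language `Red(Φ)`. -/
theorem red_subset_locPlain {α : Type} (hash : α) {k : ℕ} (hk : Odd k)
    (hk3 : 3 ≤ k) {Φ : Set (List (Sym α))} (hΦk : TaggedKWords k Φ)
    (hΦ : NonConflictual Φ) :
    Red hash k Φ ⊆ LocPlain hash ((k + 1) / 2) (erase '' Φ) :=
  red_subset_locPlain_general hash hk hk3

end HOP
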